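/- arXiv:1612.08676 — 2 statements merged into one kernel-verified Lean document; each statement's English description precedes it below -/
import Mathlib

section
/- For integers a, b, c ≥ 3 with 1/a + 1/b + 1/c < 1/2, one has 1/a + 1/b + 1/c - 1/2 ≤ -1/1806, with equality attained at (a,b,c) = (3,7,43). -/
/-!
Sort `a ≤ b ≤ c`. If `b ≥ 13` then `1/a + 1/b + 1/c ≤ 1/3 + 2/13 < 451/903 = 1/2 - 1/1806`.
Otherwise `a ≤ b ≤ 12` leaves finitely many pairs `(a, b)`, and for each of them both the
hypothesis and the claim, cleared of denominators, are linear in `c`; the extremal case is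
`(3, 7)`, where `1/c < 1/42` forces `c ≥ 43`.
-/

lemma one_div_add_one_div_add_one_div {x y z : ℝ} (hx : x ≠ 0) (hy : y ≠ 0) (hz : z ≠ 0) :
    1 / x + 1 / y + 1 / z = (x * y + y * z + z * x) / (x * y * z) := by
  field_simp
  ring

lemma one_div_add_one_div_add_one_div_lt_div_iff {x y z p q : ℝ} (hx : 0 < x) (hy : 0 < y)
    (hz : 0 < z) (hq : 0 < q) :
    1 / x + 1 / y + 1 / z < p / q ↔ q * (x * y + y * z + z * x) < p * (x * y * z) := by
  rw [one_div_add_one_div_add_one_div hx.ne' hy.ne' hz.ne', div_lt_div_iff₀ (by positivity) hq]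
  constructor <;> intro h <;> linarith

lemma one_div_add_one_div_add_one_div_le_div_iff {x y z p q : ℝ} (hx : 0 < x) (hy : 0 < y)
    (hz : 0 < z) (hq : 0 < q) :
    1 / x + 1 / y + 1 / z ≤ p / q ↔ q * (x * y + y * z + z * x) ≤ p * (x * y * z) := by
  rw [one_div_add_one_div_add_one_div hx.ne' hy.ne' hz.ne', div_le_div_iff₀ (by positivity) hq]
  constructor <;> intro h <;> linarith

lemma cleared_bound_of_le_twelve {a b c : ℕ} (ha : 3 ≤ a) (hab : a ≤ b) (hb : b ≤ 12)
    (h : 2 * (a * b + b * c + c * a) < a * b * c) :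
    903 * (a * b + b * c + c * a) ≤ 451 * (a * b * c) := by
  have ha12 : a ≤ 12 := hab.trans hb
  interval_cases a <;> interval_cases b <;> omega

lemma one_div_sum_le_of_sorted {a b c : ℕ} (ha : 3 ≤ a) (hab : a ≤ b) (hbc : b ≤ c)
    (h : 1 / (a : ℝ) + 1 / (b : ℝ) + 1 / (c : ℝ) < 1 / 2) :
    1 / (a : ℝ) + 1 / (b : ℝ) + 1 / (c : ℝ) ≤ 451 / 903 := by
  rcases le_or_gt 13 b with hb | hb
  · have ha' : (3 : ℝ) ≤ a := by exact_mod_cast ha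
    have hb' : (13 : ℝ) ≤ b := by exact_mod_cast hb
    have hc' : (13 : ℝ) ≤ c := by exact_mod_cast hb.trans hbc
    calc 1 / (a : ℝ) + 1 / (b : ℝ) + 1 / (c : ℝ) ≤ 1 / 3 + 1 / 13 + 1 / 13 := by gcongr
      _ ≤ 451 / 903 := by norm_num
  · have hpos : ∀ n : ℕ, 3 ≤ n → (0 : ℝ) < n := fun n hn => Nat.cast_pos.mpr (by omega)
    have ha₀ := hpos a ha
    have hb₀ := hpos b (ha.trans hab)
    have hc₀ := hpos c (ha.trans (hab.trans hbc))
    rw [one_div_add_one_div_add_one_div_lt_div_iff ha₀ hb₀ hc₀ two_pos, one_mul] at h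
    rw [one_div_add_one_div_add_one_div_le_div_iff ha₀ hb₀ hc₀ (by norm_num)]
    exact_mod_cast cleared_bound_of_le_twelve ha hab (by omega) (by exact_mod_cast h)

lemma one_div_sum_le {a b c : ℕ} (ha : 3 ≤ a) (hb : 3 ≤ b) (hc : 3 ≤ c)
    (h : 1 / (a : ℝ) + 1 / (b : ℝ) + 1 / (c : ℝ) < 1 / 2) :
    1 / (a : ℝ) + 1 / (b : ℝ) + 1 / (c : ℝ) ≤ 451 / 903 := by
  wlog hab : a ≤ b generalizing a b c
  · have := this hb ha hc (by linarith) (by omega)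
    linarith
  wlog hbc : b ≤ c generalizing a b c
  · rcases le_total a c with hac | hca
    · have := this ha hc hb (by linarith) hac (by omega)
      linarith
    · have := this hc ha hb (by linarith) hca hab
      linarith
  exact one_div_sum_le_of_sorted ha hab hbc h

/-- For integers `a, b, c ≥ 3` with `1/a + 1/b + 1/c < 1/2` one has
`1/a + 1/b + 1/c - 1/2 ≤ -1/1806`, and equality is attained at `(3,7,43)`. -/
theorem stmt9 :
    (∀ a b c : ℕ, 3 ≤ a → 3 ≤ b → 3 ≤ c →
      1 / (a : ℝ) + 1 / (b : ℝ) + 1 / (c : ℝ) < 1 / 2 →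
      1 / (a : ℝ) + 1 / (b : ℝ) + 1 / (c : ℝ) - 1 / 2 ≤ -(1 / 1806)) ∧
    (1 / (3 : ℝ) + 1 / (7 : ℝ) + 1 / (43 : ℝ) - 1 / 2 = -(1 / 1806)) := by
  refine ⟨fun a b c ha hb hc h => ?_, by norm_num⟩
  have := one_div_sum_le ha hb hc h
  linarith
end

section
/- If an infinite locally finite connected graph satisfies #B_r ≤ C r² for all r ≥ 1 (for some constant C) and d_v ≤ 6 for all v, then its isoperimetric constant α = inf_W #∂W/vol(W) over finite W equals 0. -/
/-!
Since every vertex of the ball `B_n` has all its neighbours in `B_{n+1}`, only the shell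
`B_{n+1} \ B_n` contributes to the boundary of `W = B_{n+1}`, so its isoperimetric ratio is at most
`6 (#B_{n+1} - #B_n) / #B_{n+1}`. If `#B_{n+1} > (1 + δ) #B_n` held for every `n`, the balls would
grow geometrically, which quadratic growth forbids; so for every `δ > 0` some ball has ratio at
most `6δ`.
-/

open SimpleGraph Finset Filter Topology

/-- The isoperimetric constant `α = inf_W #∂W / vol(W)` over finite nonempty `W`. -/
noncomputable def isoConst {V : Type*} [DecidableEq V] (G : SimpleGraph V)
    [DecidableRel G.Adj] [G.LocallyFinite] : ℝ :=
  sInf {r : ℝ | ∃ W : Finset V, W.Nonempty ∧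
    r = (∑ v ∈ W, (((G.neighborFinset v).filter (· ∉ W)).card : ℝ)) /
        (∑ v ∈ W, (G.degree v : ℝ))}

lemma exists_succ_le_mul_of_eventually_le_pow {u : ℕ → ℝ} {q C : ℝ} (k : ℕ) (hq : 1 < q)
    (hu₀ : 0 < u 0) (hu : ∀ᶠ n in atTop, u n ≤ C * n ^ k) : ∃ n, u (n + 1) ≤ q * u n := by
  by_contra! hgrow
  have hgeom : ∀ n, q ^ n * u 0 ≤ u n := by
    intro n
    induction n with
    | zero => simp
    | succ n ih =>
      calc q ^ (n + 1) * u 0 = q * (q ^ n * u 0) := by ring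
        _ ≤ q * u n := by gcongr
        _ ≤ u (n + 1) := (hgrow n).le
  have hlim : Tendsto (fun n : ℕ ↦ C * ((n : ℝ) ^ k / q ^ n)) atTop (𝓝 0) := by
    simpa using (tendsto_pow_const_div_const_pow_of_one_lt k hq).const_mul C
  obtain ⟨n, hn, hsmall⟩ := (hu.and (hlim.eventually (gt_mem_nhds hu₀))).exists
  have hqn : 0 < q ^ n := by positivity
  rw [← mul_div_assoc, div_lt_iff₀ hqn] at hsmall
  linarith [hgeom n]

namespace SimpleGraph

variable {V : Type*} {G : SimpleGraph V}

lemma exists_adj_dist_le_of_dist_eq_succ {o v : V} {n : ℕ} (h : G.dist o v = n + 1) :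
    ∃ u, G.Adj u v ∧ G.dist o u ≤ n := by
  obtain ⟨p, hp⟩ := exists_walk_of_dist_ne_zero (h.trans_ne n.succ_ne_zero)
  have hp_not_nil : ¬ p.Nil := Walk.not_nil_iff_lt_length.mpr (by omega)
  refine ⟨p.penultimate, p.adj_penultimate hp_not_nil, ?_⟩
  calc G.dist o p.penultimate ≤ p.dropLast.length := dist_le _
    _ = n := by rw [Walk.length_dropLast]; omega

lemma Connected.finite_setOf_dist_le [G.LocallyFinite] (hconn : G.Connected) (o : V) (n : ℕ) :
    {v | G.dist o v ≤ n}.Finite := by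
  induction n with
  | zero => simp [hconn.dist_eq_zero_iff]
  | succ n ih =>
    refine (ih.union (ih.biUnion fun u _ ↦ (G.neighborSet u).toFinite)).subset fun v hv ↦ ?_
    rcases Nat.le_succ_iff.mp hv with hle | heq
    · exact Or.inl hle
    · obtain ⟨u, hadj, hu⟩ := exists_adj_dist_le_of_dist_eq_succ heq
      exact Or.inr (Set.mem_biUnion hu hadj)

variable [G.LocallyFinite] [DecidableEq V]

noncomputable def isoRatio (W : Finset V) : ℝ :=
  (∑ v ∈ W, (#{u ∈ G.neighborFinset v | u ∉ W} : ℝ)) / ∑ v ∈ W, (G.degree v : ℝ)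

lemma sum_card_neighbors_not_mem_le {A W : Finset V} {D : ℕ} (hdeg : ∀ v, G.degree v ≤ D)
    (hAW : A ⊆ W) (hA : ∀ v ∈ A, ∀ u, G.Adj v u → u ∈ W) :
    ∑ v ∈ W, #{u ∈ G.neighborFinset v | u ∉ W} ≤ D * #(W \ A) := by
  have hA_zero : ∑ v ∈ A, #{u ∈ G.neighborFinset v | u ∉ W} = 0 :=
    sum_eq_zero fun v hv ↦ card_eq_zero.mpr <| filter_eq_empty_iff.mpr fun u hu ↦
      not_not.mpr (hA v hv u (G.mem_neighborFinset v u |>.mp hu))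
  rw [← sum_sdiff hAW, hA_zero, add_zero, mul_comm, ← smul_eq_mul, ← sum_const]
  exact sum_le_sum fun v _ ↦ (card_filter_le _ _).trans (G.card_neighborFinset_eq_degree v ▸ hdeg v)

lemma isoRatio_le_of_card_le_mul {A W : Finset V} {D : ℕ} {δ : ℝ} (hδ : 0 ≤ δ)
    (hdeg : ∀ v, G.degree v ≤ D) (hdeg_pos : ∀ v, 0 < G.degree v)
    (hAW : A ⊆ W) (hA : ∀ v ∈ A, ∀ u, G.Adj v u → u ∈ W) (hW : W.Nonempty)
    (hcard : (#W : ℝ) ≤ (1 + δ) * #A) :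
    G.isoRatio W ≤ D * δ := by
  have hvol : (#W : ℝ) ≤ ∑ v ∈ W, (G.degree v : ℝ) := by
    simpa using card_nsmul_le_sum W (fun v ↦ (G.degree v : ℝ)) 1
      fun v _ ↦ Nat.one_le_cast.mpr (hdeg_pos v)
  have hW_pos : (0 : ℝ) < #W := by exact_mod_cast hW.card_pos
  have hshell : (#(W \ A) : ℝ) = #W - #A := by
    rw [card_sdiff_of_subset hAW, Nat.cast_sub (card_le_card hAW)]
  have hA_le : (#A : ℝ) ≤ #W := by exact_mod_cast card_le_card hAW
  rw [isoRatio, div_le_iff₀ (hW_pos.trans_le hvol)]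
  calc ∑ v ∈ W, (#{u ∈ G.neighborFinset v | u ∉ W} : ℝ)
      ≤ D * #(W \ A) := by exact_mod_cast sum_card_neighbors_not_mem_le hdeg hAW hA
    _ ≤ D * (δ * #W) := by rw [hshell]; gcongr; nlinarith
    _ ≤ D * (δ * ∑ v ∈ W, (G.degree v : ℝ)) := by gcongr
    _ = D * δ * ∑ v ∈ W, (G.degree v : ℝ) := by ring

lemma isoConst_eq_zero_of_forall_exists_isoRatio_lt [DecidableRel G.Adj]
    (h : ∀ ε > 0, ∃ W : Finset V, W.Nonempty ∧ G.isoRatio W < ε) :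
    isoConst G = 0 := by
  obtain ⟨W, hW, -⟩ := h 1 one_pos
  refine csInf_eq_of_forall_ge_of_forall_gt_exists_lt ⟨_, W, hW, rfl⟩ ?_ fun ε hε ↦ ?_
  · rintro _ ⟨W, -, rfl⟩
    positivity
  · obtain ⟨W, hW, hlt⟩ := h ε hε
    exact ⟨_, ⟨W, hW, rfl⟩, hlt⟩

end SimpleGraph

/-- An infinite connected graph with all degrees at most 6 and quadratic volume growth
`#B_r ≤ C r²` has vanishing isoperimetric constant. -/
theorem stmt14 {V : Type*} [Infinite V] [DecidableEq V] (G : SimpleGraph V)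
    [DecidableRel G.Adj] [G.LocallyFinite] (hconn : G.Connected)
    (hdeg : ∀ v, G.degree v ≤ 6) (o : V) (C : ℝ)
    (hgrowth : ∀ r : ℕ, 1 ≤ r → (({v | G.dist o v ≤ r} : Set V).ncard : ℝ) ≤ C * r ^ 2) :
    isoConst G = 0 := by
  set B : ℕ → Finset V := fun n ↦ (hconn.finite_setOf_dist_le o n).toFinset
  have hmem (n : ℕ) (v : V) : v ∈ B n ↔ G.dist o v ≤ n := Set.Finite.mem_toFinset _
  have ho (n : ℕ) : o ∈ B n := (hmem n o).mpr (by simp)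
  refine isoConst_eq_zero_of_forall_exists_isoRatio_lt fun ε hε ↦ ?_
  obtain ⟨n, hn⟩ := exists_succ_le_mul_of_eventually_le_pow (u := fun n ↦ (#(B n) : ℝ)) 2
    (q := 1 + ε / 12) (C := C) (by linarith) (by exact_mod_cast card_pos.mpr ⟨o, ho 0⟩)
    (eventually_atTop.mpr ⟨1, fun r hr ↦ by
      simpa only [B, Set.ncard_eq_toFinset_card _ (hconn.finite_setOf_dist_le o r)]
        using hgrowth r hr⟩)
  refine ⟨B (n + 1), ⟨o, ho _⟩, ?_⟩
  have hball : ∀ v ∈ B n, ∀ u, G.Adj v u → u ∈ B (n + 1) := fun v hv u hadj ↦ by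
    rw [hmem] at hv ⊢
    have := hconn.dist_triangle (u := o) (v := v) (w := u)
    rw [dist_eq_one_iff_adj.mpr hadj] at this
    omega
  have hsub : B n ⊆ B (n + 1) := fun v hv ↦ (hmem _ v).mpr (Nat.le_succ_of_le ((hmem n v).mp hv))
  calc _ ≤ ((6 : ℕ) : ℝ) * (ε / 12) :=
        isoRatio_le_of_card_le_mul (by positivity) hdeg
          (fun v ↦ hconn.preconnected.degree_pos_of_nontrivial v) hsub hball ⟨o, ho _⟩ hn
    _ < ε := by push_cast; linarith
end
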